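/- arXiv:2410.15795 — 7 statements merged into one kernel-verified Lean document; each statement's English description precedes it below -/
import Mathlib

section
/- Let x : ℕ → ℕ → ℕ. Define sequences m : ℕ → ℕ and y : ℕ → ℕ recursively by m 0 = 0, and at each stage s: if there exists k ≤ s with x (m s) k ≠ 0, then y s = 1 and m (s+1) = m s + 1; otherwise y s = 0 and m (s+1) = m s. Then (∀ a, ∃ k, x a k ≠ 0) holds if and only if the set {s : ℕ | y s ≠ 0} is infinite. -/
/-- the ∀∃-pattern reduces to the ∃^∞-pattern. -/
theorem stmt_0 (x : ℕ → ℕ → ℕ) (m y : ℕ → ℕ)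
    (hm0 : m 0 = 0)
    (hpos : ∀ s, (∃ k ≤ s, x (m s) k ≠ 0) → y s = 1 ∧ m (s + 1) = m s + 1)
    (hneg : ∀ s, ¬ (∃ k ≤ s, x (m s) k ≠ 0) → y s = 0 ∧ m (s + 1) = m s) :
    (∀ a, ∃ k, x a k ≠ 0) ↔ {s : ℕ | y s ≠ 0}.Infinite := by
  -- step lemmas
  have hzero : ∀ s, y s = 0 → m (s + 1) = m s := by
    intro s hy
    by_cases h : ∃ k ≤ s, x (m s) k ≠ 0
    · exact absurd hy (by simp [(hpos s h).1])
    · exact (hneg s h).2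
  have hstep : ∀ s, y s ≠ 0 → m (s + 1) = m s + 1 ∧ ∃ k ≤ s, x (m s) k ≠ 0 := by
    intro s hy
    by_cases h : ∃ k ≤ s, x (m s) k ≠ 0
    · exact ⟨(hpos s h).2, h⟩
    · exact absurd (hneg s h).1 hy
  -- constancy on intervals with no y-stage
  have hconst : ∀ a b, a ≤ b → (∀ u, a ≤ u → u < b → y u = 0) → m b = m a := by
    intro a b hab
    induction b with
    | zero => intro _; rw [Nat.le_zero.mp hab]
    | succ b ih =>
      intro h
      rcases Nat.lt_or_ge a (b + 1) with hlt | hge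
      · have hab' : a ≤ b := Nat.lt_succ_iff.mp hlt
        rw [hzero b (h b hab' (Nat.lt_succ_self b))]
        exact ih hab' (fun u hu hub => h u hu (Nat.lt_succ_of_lt hub))
      · have : a = b + 1 := le_antisymm hab hge
        rw [this]
  constructor
  · intro hall
    by_contra hfin
    rw [Set.not_infinite] at hfin
    obtain ⟨N, hN⟩ := hfin.bddAbove
    -- for s ≥ N+1, y s = 0
    have hy0 : ∀ s, N + 1 ≤ s → y s = 0 := by
      intro s hs
      by_contra hy
      have := hN (show s ∈ {s : ℕ | y s ≠ 0} from hy)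
      omega
    obtain ⟨k, hk⟩ := hall (m (N + 1))
    set s := max (N + 1) k with hs
    have hms : m s = m (N + 1) :=
      hconst (N + 1) s (le_max_left _ _) (fun u hu _ => hy0 u hu)
    have hcond : ∃ j ≤ s, x (m s) j ≠ 0 := ⟨k, le_max_right _ _, by rw [hms]; exact hk⟩
    have := (hpos s hcond).1
    have := hy0 s (le_max_left _ _)
    omega
  · intro hinf a
    -- claim: ∀ n, ∃ s, m s = n ∧ y s ≠ 0
    have claim : ∀ n, ∃ s, m s = n ∧ y s ≠ 0 := by
      have next : ∀ t, (∀ u, u < t → y u = 0) → m t = 0 ∨ True := fun _ _ => Or.inr trivial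
      have key : ∀ c, (∃ t, m t = c) → ∃ s, m s = c ∧ y s ≠ 0 := by
        intro c ⟨t, ht⟩
        have hex : ∃ u, t ≤ u ∧ y u ≠ 0 := by
          obtain ⟨u, hu, hgt⟩ := hinf.exists_gt t
          exact ⟨u, le_of_lt hgt, hu⟩
        classical
        let s := Nat.find hex
        obtain ⟨hts, hys⟩ := Nat.find_spec hex
        refine ⟨s, ?_, hys⟩
        rw [hconst t s hts ?_, ht]
        intro u hu hus
        by_contra hy
        exact Nat.find_min hex hus ⟨hu, hy⟩
      intro n
      induction n with
      | zero => exact key 0 ⟨0, hm0⟩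
      | succ n ih =>
        obtain ⟨s, hms, hys⟩ := ih
        exact key (n + 1) ⟨s + 1, by rw [(hstep s hys).1, hms]⟩
    obtain ⟨s, hms, hys⟩ := claim a
    obtain ⟨-, k, -, hk⟩ := hstep s hys
    exact ⟨k, by rwa [hms] at hk⟩
end

section
/- Let x : ℕ → ℕ → ℕ. Define y : ℕ → ℕ by y s = min ({n | n ≤ s ∧ x n s ≠ 0} ∪ {s}) (the minimum of the displayed nonempty set of naturals). Then (∀ n, ∃ s₀, ∀ t ≥ s₀, x n t = 0) holds if and only if y tends to infinity (Filter.Tendsto y Filter.atTop Filter.atTop). -/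
/-- the divergence problem is ∀∀^∞-complete. -/
theorem stmt_5 (x : ℕ → ℕ → ℕ) (y : ℕ → ℕ)
    (hy : ∀ s, y s = sInf ({n | n ≤ s ∧ x n s ≠ 0} ∪ {s})) :
    (∀ n, ∃ s₀, ∀ t ≥ s₀, x n t = 0) ↔ Filter.Tendsto y Filter.atTop Filter.atTop := by
  constructor
  · intro h
    rw [Filter.tendsto_atTop_atTop]
    intro N
    choose f hf using h
    refine ⟨max N (Finset.sup (Finset.range N) f), fun t ht => ?_⟩
    rw [hy]
    apply le_csInf ⟨t, Or.inr rfl⟩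
    rintro m (⟨hm, hxm⟩ | rfl)
    · by_contra hlt
      push_neg at hlt
      exact hxm (hf m t (le_trans (le_trans (Finset.le_sup (Finset.mem_range.2 hlt))
        (le_max_right _ _)) ht))
    · exact le_trans (le_max_left _ _) ht
  · intro h n
    rw [Filter.tendsto_atTop_atTop] at h
    obtain ⟨s₀, hs₀⟩ := h (n + 1)
    refine ⟨max s₀ n, fun t ht => ?_⟩
    by_contra hx
    have h1 : y t ≤ n := hy t ▸ Nat.sInf_le (Or.inl ⟨le_trans (le_max_right _ _) ht, hx⟩)
    have h2 := hs₀ t (le_trans (le_max_left _ _) ht)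
    omega
end

section
/- Let G be a simple graph on a vertex type V. Define a simple graph G' on V ⊕ (V × V) by: inl u is adjacent to inl v iff G.Adj u v; inl w is adjacent to inr (u, v) iff u ≠ v, G.Reachable u v, and (w = u or w = v); and no vertex inr (u,v) is adjacent to another inr-vertex. Then: (1) for all u v : V, G'.Reachable (inl u) (inl v) if and only if G.Reachable u v; and (2) if G.Reachable u v with u ≠ v, then there is a walk in G' from inl u to inl v of length at most 2. -/
/-!
Each `inr (u, v)` is a common neighbour of `inl u` and `inl v` exactly when `u ≠ v` lie in the
same component of `G`, which gives the walks of length two. Conversely, sending `inl u` and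
`inr (u, v)` to `u` maps the two ends of every edge of `G' G` to `G`-reachable vertices, so
reachability in `G' G` projects to reachability in `G`.
-/

open SimpleGraph

/-- The transitive-closure-collapsing graph `G'` on `V ⊕ (V × V)`. -/
def adj' {V : Type*} (G : SimpleGraph V) : (V ⊕ V × V) → (V ⊕ V × V) → Prop
  | .inl u, .inl v => G.Adj u v
  | .inl w, .inr (u, v) => u ≠ v ∧ G.Reachable u v ∧ (w = u ∨ w = v)
  | .inr (u, v), .inl w => u ≠ v ∧ G.Reachable u v ∧ (w = u ∨ w = v)
  | .inr _, .inr _ => False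

def G' {V : Type*} (G : SimpleGraph V) : SimpleGraph (V ⊕ V × V) where
  Adj := adj' G
  symm := by
    refine ⟨fun a b h => ?_⟩
    rcases a with u | ⟨u, v⟩ <;> rcases b with w | ⟨w, z⟩ <;>
      simp only [adj'] at h ⊢
    · exact h.symm
    · exact h
    · exact h
  loopless := by
    refine ⟨fun a h => ?_⟩
    rcases a with u | ⟨u, v⟩ <;> simp only [adj'] at h
    exact (G.ne_of_adj h) rfl

theorem SimpleGraph.Reachable.lift {V W : Type*} {G : SimpleGraph V} {H : SimpleGraph W}
    (f : W → V) (hf : ∀ a b, H.Adj a b → G.Reachable (f a) (f b)) {a b : W}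
    (h : H.Reachable a b) : G.Reachable (f a) (f b) := by
  obtain ⟨p⟩ := h
  induction p with
  | nil => rfl
  | cons hadj _ ih => exact (hf _ _ hadj).trans ih

section G'

variable {V : Type*} {G : SimpleGraph V} {u v : V}

theorem G'_adj_inl_inr_left (huv : u ≠ v) (h : G.Reachable u v) :
    (G' G).Adj (.inl u) (.inr (u, v)) :=
  ⟨huv, h, .inl rfl⟩

theorem G'_adj_inr_inl_right (huv : u ≠ v) (h : G.Reachable u v) :
    (G' G).Adj (.inr (u, v)) (.inl v) :=
  ⟨huv, h, .inr rfl⟩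

theorem exists_G'_walk_length_two (h : G.Reachable u v) (huv : u ≠ v) :
    ∃ w : (G' G).Walk (.inl u) (.inl v), w.length = 2 :=
  ⟨.cons (G'_adj_inl_inr_left huv h) (.cons (G'_adj_inr_inl_right huv h) .nil), rfl⟩

theorem G'_reachable_inl_of_reachable (h : G.Reachable u v) :
    (G' G).Reachable (.inl u) (.inl v) := by
  rcases eq_or_ne u v with rfl | huv
  · rfl
  · obtain ⟨w, -⟩ := exists_G'_walk_length_two h huv
    exact ⟨w⟩

theorem reachable_elim_fst_of_G'_adj {a b : V ⊕ V × V} (h : (G' G).Adj a b) :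
    G.Reachable (Sum.elim id Prod.fst a) (Sum.elim id Prod.fst b) := by
  rcases a with w | ⟨u, v⟩ <;> rcases b with w' | ⟨u', v'⟩
  · exact Adj.reachable h
  · obtain ⟨-, huv, rfl | rfl⟩ := h
    · rfl
    · exact huv.symm
  · obtain ⟨-, huv, rfl | rfl⟩ := h
    · rfl
    · exact huv
  · exact h.elim

theorem reachable_of_G'_reachable_inl (h : (G' G).Reachable (.inl u) (.inl v)) :
    G.Reachable u v :=
  h.lift (Sum.elim id Prod.fst) fun _ _ => reachable_elim_fst_of_G'_adj

end G'

/-- `G'` preserves reachability between original vertices, and within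
a connected component the distance collapses to at most 2. -/
theorem stmt_10 {V : Type*} (G : SimpleGraph V) :
    (∀ u v : V, (G' G).Reachable (Sum.inl u) (Sum.inl v) ↔ G.Reachable u v) ∧
    (∀ u v : V, G.Reachable u v → u ≠ v →
      ∃ w : (G' G).Walk (Sum.inl u) (Sum.inl v), w.length ≤ 2) := by
  refine ⟨fun u v => ⟨reachable_of_G'_reachable_inl, G'_reachable_inl_of_reachable⟩,
    fun u v h huv => ?_⟩
  obtain ⟨w, hw⟩ := exists_G'_walk_length_two h huv
  exact ⟨w, hw.le⟩
end

section
/- Let x : ℕ → ℕ. Define y : ℕ → ℚ by y t = 1/(2·(x t) + 1) if the cardinality of {s | s < t ∧ x s = x t} is even, and y t = 1/(2·(x t) + 2) if it is odd. Then x tends to infinity (Filter.Tendsto x Filter.atTop Filter.atTop) if and only if y is a Cauchy sequence of rationals. -/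
/-!
If `x` does not tend to infinity, some value `n` is taken infinitely often. Along the
successive occurrences of `n` the occurrence count runs through `0, 1, 2, …`, so this
subsequence of `y` alternates between `1 / (2n + 1)` and `1 / (2n + 2)` and `y` is not Cauchy.
Conversely `0 ≤ y t ≤ 1 / (x t + 1)`, so if `x` tends to infinity then `y` tends to `0`.
-/

open Filter Topology

/-- `‖q‖` is real-valued on `ℚ`, so `isCauSeq_iff_cauchySeq` does not apply directly. -/
lemma Rat.isCauSeq_abs_iff_cauchySeq {f : ℕ → ℚ} : IsCauSeq abs f ↔ CauchySeq f := by
  have habs : (abs : ℝ → ℝ) = norm := funext fun r => (Real.norm_eq_abs r).symm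
  rw [Real.isCauSeq_iff_lift, habs, isCauSeq_iff_cauchySeq]
  show Cauchy (map ((Rat.cast : ℚ → ℝ) ∘ f) atTop) ↔ _
  rw [← map_map, Rat.isUniformEmbedding_coe_real.isUniformInducing.cauchy_map_iff]
  rfl

lemma not_cauchySeq_of_alternating {α : Type*} [MetricSpace α] {u : ℕ → α} {a b : α}
    (hab : a ≠ b) (hu : ∀ k, u k = if Even k then a else b) : ¬ CauchySeq u := by
  intro hc
  obtain ⟨N, hN⟩ := Metric.cauchySeq_iff'.1 hc (dist a b) (dist_pos.2 hab)
  have hstep := hN (N + 1) N.le_succ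
  rw [hu, hu] at hstep
  rcases N.even_or_odd with hN | hN
  · simp [Nat.even_add_one, hN, dist_comm] at hstep
  · simp [hN, Nat.not_even_iff_odd.2 hN] at hstep

def parityRecip (n k : ℕ) : ℚ :=
  if Even k then 1 / (2 * n + 1) else 1 / (2 * n + 2)

lemma parityRecip_nonneg (n k : ℕ) : 0 ≤ parityRecip n k := by
  unfold parityRecip
  split_ifs <;> positivity

lemma parityRecip_le (n k : ℕ) : parityRecip n k ≤ 1 / ((n : ℚ) + 1) := by
  unfold parityRecip
  split_ifs <;> gcongr <;> linarith [(n.cast_nonneg : (0 : ℚ) ≤ n)]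

lemma one_div_two_mul_add_one_ne_add_two (n : ℕ) :
    (1 : ℚ) / (2 * n + 1) ≠ 1 / (2 * n + 2) := by
  rw [Ne, div_eq_div_iff (by positivity) (by positivity)]
  linarith

section

variable {x : ℕ → ℕ} {y : ℕ → ℚ}
  (hy : ∀ t, y t = parityRecip (x t) (Nat.count (x · = x t) t))
include hy

lemma tendsto_nhds_zero_of_tendsto_atTop (hx : Tendsto x atTop atTop) :
    Tendsto y atTop (𝓝 0) := by
  refine tendsto_of_tendsto_of_tendsto_of_le_of_le tendsto_const_nhds
    (tendsto_one_div_add_atTop_nhds_zero_nat.comp hx) (fun t => ?_) (fun t => ?_) <;>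
    simp only [hy, Function.comp]
  exacts [parityRecip_nonneg _ _, parityRecip_le _ _]

lemma finite_preimage_singleton_of_cauchySeq (hc : CauchySeq y) (n : ℕ) :
    (x ⁻¹' {n}).Finite := by
  by_contra hfin
  have hinf : {t | x t = n}.Infinite := hfin
  have hnth : ∀ k, y (Nat.nth (x · = n) k) = parityRecip n k := fun k => by
    have hmem : x (Nat.nth (x · = n) k) = n := Nat.nth_mem_of_infinite hinf k
    rw [hy, hmem, Nat.count_nth_of_infinite hinf]
  exact not_cauchySeq_of_alternating (one_div_two_mul_add_one_ne_add_two n) hnth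
    (hc.comp_tendsto (Nat.nth_strictMono hinf).tendsto_atTop)

end

/-- divergence of `x` is equivalent to Cauchyness of the derived
rational sequence `y`. -/
theorem stmt_11 (x : ℕ → ℕ) (y : ℕ → ℚ)
    (hy : ∀ t, y t =
      if Even (((Finset.range t).filter fun s => x s = x t).card)
      then 1 / (2 * (x t : ℚ) + 1)
      else 1 / (2 * (x t : ℚ) + 2)) :
    Filter.Tendsto x Filter.atTop Filter.atTop ↔ IsCauSeq (abs : ℚ → ℚ) y := by
  have hy' : ∀ t, y t = parityRecip (x t) (Nat.count (x · = x t) t) := fun t => by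
    rw [hy, Nat.count_eq_card_filter_range]
    rfl
  rw [Rat.isCauSeq_abs_iff_cauchySeq]
  refine ⟨fun hx => (tendsto_nhds_zero_of_tendsto_atTop hy' hx).cauchySeq, fun hc => ?_⟩
  rw [← Nat.cofinite_eq_atTop]
  exact Tendsto.cofinite_of_finite_preimage_singleton fun n =>
    (finite_preimage_singleton_of_cauchySeq hy' hc n).to_subtype
end

section
/- Let x : ℕ → Bool. Define y : ℕ → Bool by y k = true if x k = true, or if x k = false and the cardinality of {j | j < k ∧ x j = false} is even; and y k = false otherwise. For t ≥ 1 write a t = |{k < t : x k = true}|, F_x(t) = a t / t, and F_y(t) = |{k < t : y k = true}| / t (as real numbers). Then: (1) for all t ≥ 1, |F_y(t) − (t + a t)/(2t)| ≤ 1/(2t); and (2) F_x(t) → 0 as t → ∞ if and only if F_y(t) → 1/2 as t → ∞. -/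
/-! Turning every other `false` of `x` into `true` keeps the `true`s of `x` and adds half (rounded
up) of its `false`s, so `2 · #{k < t | y k}` is `t + a t` up to `1`. Hence
`F_y(t) = 1/2 + F_x(t)/2 + O(1/t)`, and `F_x → 0` exactly when `F_y → 1/2`. -/

open Filter Topology

namespace Nat

lemma count_eq_true_add_count_eq_false (x : ℕ → Bool) (t : ℕ) :
    count (x · = true) t + count (x · = false) t = t := by
  induction t with
  | zero => simp
  | succ n ih => cases hxn : x n <;> simp [count_succ, hxn] <;> omega

lemma count_fill_even_falses {x y : ℕ → Bool}
    (hy : ∀ k, y k = true ↔ x k = true ∨ Even (count (x · = false) k)) (t : ℕ) :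
    count (y · = true) t = count (x · = true) t + (count (x · = false) t + 1) / 2 := by
  induction t with
  | zero => simp
  | succ n ih =>
    rcases Nat.even_or_odd (count (x · = false) n) with ⟨m, hm⟩ | ⟨m, hm⟩ <;>
      cases hxn : x n <;> simp [count_succ, hy n, hxn, ih, hm] <;> omega

lemma count_fill_even_falses_bounds {x y : ℕ → Bool}
    (hy : ∀ k, y k = true ↔ x k = true ∨ Even (count (x · = false) k)) (t : ℕ) :
    t + count (x · = true) t ≤ 2 * count (y · = true) t ∧
      2 * count (y · = true) t ≤ t + count (x · = true) t + 1 := by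
  have := count_eq_true_add_count_eq_false x t
  rw [count_fill_even_falses hy]
  omega

end Nat

lemma abs_div_sub_add_div_two_mul_le {t a c : ℕ} (ht : 0 < t) (hlo : t + a ≤ 2 * c)
    (hhi : 2 * c ≤ t + a + 1) :
    |(c : ℝ) / t - ((t : ℝ) + a) / (2 * t)| ≤ 1 / (2 * t) := by
  have ht' : (0 : ℝ) < 2 * t := by positivity
  have hlo' : (t : ℝ) + a ≤ 2 * c := by exact_mod_cast hlo
  have hhi' : (2 * c : ℝ) ≤ t + a + 1 := by exact_mod_cast hhi
  have hcommon : (c : ℝ) / t - ((t : ℝ) + a) / (2 * t) = (2 * c - ((t : ℝ) + a)) / (2 * t) := by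
    field_simp
  rw [hcommon, abs_div, abs_of_pos ht']
  gcongr
  exact abs_le.mpr ⟨by linarith, by linarith⟩

lemma tendsto_zero_iff_tendsto_half_of_sub {α : Type*} {l : Filter α} {F G : α → ℝ}
    (h : Tendsto (fun t => G t - (1 / 2 + F t / 2)) l (𝓝 0)) :
    Tendsto F l (𝓝 0) ↔ Tendsto G l (𝓝 (1 / 2)) := by
  constructor
  · intro hF
    have := h.add ((hF.div_const 2).const_add (1 / 2))
    rw [zero_div, add_zero, zero_add] at this
    exact this.congr fun t => by ring
  · intro hG
    have := ((hG.sub h).sub_const (1 / 2)).const_mul 2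
    rw [sub_zero, sub_self, mul_zero] at this
    exact this.congr fun t => by ring

/-- asymptotic density 0 reduces to simple normality in base 2. -/
theorem stmt_12 (x y : ℕ → Bool) (a : ℕ → ℕ) (Fx Fy : ℕ → ℝ)
    (hy : ∀ k, y k = true ↔
      (x k = true ∨ Even (((Finset.range k).filter fun j => x j = false).card)))
    (ha : ∀ t, a t = ((Finset.range t).filter fun k => x k = true).card)
    (hFx : ∀ t, Fx t = (a t : ℝ) / t)
    (hFy : ∀ t, Fy t = (((Finset.range t).filter fun k => y k = true).card : ℝ) / t) :
    (∀ t, 1 ≤ t → |Fy t - ((t : ℝ) + a t) / (2 * t)| ≤ 1 / (2 * t)) ∧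
    (Tendsto Fx atTop (nhds 0) ↔ Tendsto Fy atTop (nhds (1 / 2))) := by
  simp only [← Nat.count_eq_card_filter_range] at hy ha hFy
  have hbound (t : ℕ) (ht : 1 ≤ t) : |Fy t - ((t : ℝ) + a t) / (2 * t)| ≤ 1 / (2 * t) := by
    obtain ⟨hlo, hhi⟩ := Nat.count_fill_even_falses_bounds hy t
    rw [hFy, ha]
    exact abs_div_sub_add_div_two_mul_le ht hlo hhi
  refine ⟨hbound, tendsto_zero_iff_tendsto_half_of_sub ?_⟩
  have hdecay : Tendsto (fun t : ℕ => 1 / (2 * (t : ℝ))) atTop (𝓝 0) := by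
    have := (tendsto_one_div_atTop_nhds_zero_nat (𝕜 := ℝ)).div_const 2
    rw [zero_div] at this
    exact this.congr fun t => by rw [div_div, mul_comm]
  refine squeeze_zero_norm' ?_ hdecay
  filter_upwards [eventually_ge_atTop 1] with t ht
  have hmid : ((t : ℝ) + a t) / (2 * t) = 1 / 2 + Fx t / 2 := by
    rw [hFx]; field_simp
  rw [Real.norm_eq_abs, ← hmid]
  exact hbound t ht
end

section
/- Give ℕ the discrete topology and function spaces the product topology. There do not exist continuous functions η : (ℕ → ℕ → ℕ) → (ℕ → ℕ → ℕ), r₋ : ℕ × (ℕ → ℕ → ℕ) → ℕ, and r₊ : ℕ × (ℕ → ℕ → ℕ) → ℕ such that for every x : ℕ → ℕ → ℕ, writing y = η x: (i) (∃ N, ∀ n ≥ N, {t | x n t ≠ 0} is infinite) ↔ (∃ N, ∀ n ≥ N, ∃ t, y n t ≠ 0); (ii) whenever a satisfies ∀ n ≥ a, {t | x n t ≠ 0} is infinite, then b = r₋ (a, x) satisfies ∀ n ≥ b, ∃ t, y n t ≠ 0; and (iii) whenever b satisfies ∀ n ≥ b, ∃ t, y n t ≠ 0, then a = r₊ (b,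 x) satisfies ∀ n ≥ a, {t | x n t ≠ 0} is infinite. -/
/-!
If `η`, `r₋`, `r₊` existed, `r₋ (a, ·)` would be bounded, say by `B a`, on the compact set of
`{0,1}`-valued matrices. Build `x` as the limit of stages `x_j` whose rows below `j` are finite and
whose rows from `j` on are constantly `1`. By (ii) the rows of `η x_j` from `B j` on are nonempty,
and by continuity of `η` the finitely many rows in `[B j, B (j + 1))` stay nonempty once a finite
square of `x_j` is frozen. Cutting each row beyond all squares frozen so far gives a matrix whose
rows are all finite, while every row of its `η`-image from `B 0` on is nonempty, contradicting (iii).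
-/

open Set

def EqOnSquare {α : Type*} (T : ℕ) (x y : ℕ → ℕ → α) : Prop :=
  ∀ n < T, ∀ t < T, x n t = y n t

theorem EqOnSquare.mono {α : Type*} {S T : ℕ} {x y : ℕ → ℕ → α} (h : EqOnSquare T x y)
    (hST : S ≤ T) : EqOnSquare S x y :=
  fun n hn t ht => h n (hn.trans_le hST) t (ht.trans_le hST)

theorem IsOpen.exists_eqOnSquare_subset {α : Type*} [TopologicalSpace α] {U : Set (ℕ → ℕ → α)}
    (hU : IsOpen U) {x : ℕ → ℕ → α} (hx : x ∈ U) : ∃ T, {y | EqOnSquare T y x} ⊆ U := by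
  obtain ⟨I, u, hu, hIu⟩ := isOpen_pi_iff.mp (hU.preimage (Homeomorph.piCurry (Z := α)).continuous)
    (Function.uncurry x) hx
  refine ⟨I.sup (fun p => max p.1 p.2) + 1, fun y hy => @hIu (Function.uncurry y) fun p hp => ?_⟩
  have hle : max p.1 p.2 ≤ I.sup (fun p => max p.1 p.2) :=
    Finset.le_sup (f := fun p => max p.1 p.2) hp
  have hyx : y p.1 p.2 = x p.1 p.2 := hy _ (by omega) _ (by omega)
  simpa [Function.uncurry, hyx] using (hu p hp).2

theorem isOpen_setOf_forall_mem_exists_ne_zero {X : Type*} [TopologicalSpace X]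
    {η : X → ℕ → ℕ → ℕ} (hη : Continuous η) (s : Finset ℕ) :
    IsOpen {y | ∀ n ∈ s, ∃ t, η y n t ≠ 0} := by
  have : {y | ∀ n ∈ s, ∃ t, η y n t ≠ 0} = ⋂ n ∈ s, ⋃ t, (fun y => η y n t) ⁻¹' {0}ᶜ := by
    ext; simp
  rw [this]
  exact isOpen_biInter_finset fun n _ => isOpen_iUnion fun t =>
    (isOpen_discrete _).preimage (by fun_prop)

theorem exists_eq_apply_of_causal {α : Type*} [Inhabited α] (F : ℕ → (ℕ → α) → α)
    (hF : ∀ j c c', (∀ n < j, c n = c' n) → F j c = F j c') : ∃ c : ℕ → α, ∀ j, c j = F j c := by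
  let c : ℕ → α := Nat.strongRec fun j ih => F j fun n => if h : n < j then ih n h else default
  refine ⟨c, fun j => ?_⟩
  rw [show c j = _ from Nat.strongRec_eq _ j]
  exact hF j _ _ fun n hn => dif_pos hn

theorem exists_mem_Ico_succ {α : Type*} [LinearOrder α] {f : ℕ → α} {a : α} (h0 : f 0 ≤ a)
    {m : ℕ} (hm : a < f m) : ∃ j, a ∈ Ico (f j) (f (j + 1)) := by
  induction m with
  | zero => exact absurd h0 (not_le.mpr hm)
  | succ m ih =>
    by_cases h : f m ≤ a
    · exact ⟨m, h, hm⟩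
    · exact ih (not_le.mp h)

def cutRows (c : ℕ → ℕ) : ℕ → ℕ → ℕ := fun n t => if c n ≤ t then 0 else 1

def cutRowsBelow (c : ℕ → ℕ) (j : ℕ) : ℕ → ℕ → ℕ := fun n t => if n < j then cutRows c n t else 1

theorem cutRows_row_finite (c : ℕ → ℕ) (n : ℕ) : {t | cutRows c n t ≠ 0}.Finite :=
  (finite_Iio (c n)).subset fun t ht => by simpa [cutRows] using ht

theorem cutRowsBelow_le_one (c : ℕ → ℕ) (j n t : ℕ) : cutRowsBelow c j n t ≤ 1 := by
  unfold cutRowsBelow cutRows; split_ifs <;> simp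

theorem cutRowsBelow_row_infinite (c : ℕ → ℕ) {j n : ℕ} (h : j ≤ n) :
    {t | cutRowsBelow c j n t ≠ 0}.Infinite := by
  simpa [cutRowsBelow, not_lt.mpr h] using infinite_univ

theorem cutRowsBelow_congr {c c' : ℕ → ℕ} {j : ℕ} (h : ∀ n < j, c n = c' n) :
    cutRowsBelow c j = cutRowsBelow c' j := by
  ext n t
  by_cases hn : n < j <;> simp [cutRowsBelow, cutRows, hn, h]

theorem eqOnSquare_cutRows_cutRowsBelow {c : ℕ → ℕ} (hc : Monotone c) (j : ℕ) :
    EqOnSquare (c j) (cutRows c) (cutRowsBelow c j) := by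
  intro n _ t ht
  by_cases hn : n < j
  · simp [cutRowsBelow, hn]
  · have : t < c n := ht.trans_le (hc (not_lt.mp hn))
    simp [cutRowsBelow, cutRows, hn, not_le.mpr this]

theorem exists_forall_cutRows {P : ℕ → (ℕ → ℕ → ℕ) → Prop}
    (hP : ∀ j c, ∃ T, ∀ y, EqOnSquare T y (cutRowsBelow c j) → P j y) :
    ∃ c, ∀ j, P j (cutRows c) := by
  -- Row `j` is cut beyond the square frozen at stage `j` and beyond all earlier cuts, so later
  -- cuts do not disturb that square.
  let modulus j c := sInf {T | ∀ y, EqOnSquare T y (cutRowsBelow c j) → P j y}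
  obtain ⟨c, hc⟩ :=
    exists_eq_apply_of_causal (fun j c => max (modulus j c) ((Finset.range j).sup c)) fun j c c' h => by
      simp only [modulus, cutRowsBelow_congr h,
        Finset.sup_congr rfl fun n hn => h n (Finset.mem_range.mp hn)]
  have hmono : Monotone c := monotone_nat_of_le_succ fun j => by
    rw [hc (j + 1)]
    exact le_max_of_le_right (Finset.le_sup (Finset.self_mem_range_succ j))
  refine ⟨c, fun j => Nat.sInf_mem (hP j c) _ ((eqOnSquare_cutRows_cutRowsBelow hmono j).mono ?_)⟩
  rw [hc j]
  exact le_max_left _ _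

/-- continuous version of the separation ⟨∀^∞∃^∞⟩ ≰ ⟨∀^∞∃⟩. -/
theorem stmt_13 :
    ¬ ∃ (η : (ℕ → ℕ → ℕ) → (ℕ → ℕ → ℕ)) (rminus rplus : ℕ × (ℕ → ℕ → ℕ) → ℕ),
      Continuous η ∧ Continuous rminus ∧ Continuous rplus ∧
      ∀ x : ℕ → ℕ → ℕ,
        ((∃ N, ∀ n ≥ N, {t : ℕ | x n t ≠ 0}.Infinite) ↔
          (∃ N, ∀ n ≥ N, ∃ t, η x n t ≠ 0)) ∧
        (∀ a, (∀ n ≥ a, {t : ℕ | x n t ≠ 0}.Infinite) →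
          ∀ n ≥ rminus (a, x), ∃ t, η x n t ≠ 0) ∧
        (∀ b, (∀ n ≥ b, ∃ t, η x n t ≠ 0) →
          ∀ n ≥ rplus (b, x), {t : ℕ | x n t ≠ 0}.Infinite) := by
  rintro ⟨η, rminus, rplus, hη, hrminus, -, H⟩
  have hK : IsCompact (univ.pi fun _ : ℕ => univ.pi fun _ : ℕ => Iic 1) :=
    isCompact_univ_pi fun _ => isCompact_univ_pi fun _ => (finite_Iic 1).isCompact
  choose B hB using fun a =>
    hK.bddAbove_image (hrminus.comp (Continuous.prodMk_right a)).continuousOn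
  -- `N a ≥ a` makes the blocks `[N j, N (j + 1))` cover every row from `N 0` on.
  set N : ℕ → ℕ := fun a => a + B a
  obtain ⟨c, hc⟩ := exists_forall_cutRows
    (P := fun j y => ∀ n ∈ Finset.Ico (N j) (N (j + 1)), ∃ t, η y n t ≠ 0) fun j c => by
      refine (isOpen_setOf_forall_mem_exists_ne_zero hη _).exists_eqOnSquare_subset fun n hn => ?_
      have hbound : rminus (j, cutRowsBelow c j) ≤ B j :=
        hB j ⟨_, fun m _ t _ => cutRowsBelow_le_one c j m t, rfl⟩
      exact (H (cutRowsBelow c j)).2.1 j (fun m hm => cutRowsBelow_row_infinite c hm) n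
        (by simp only [N, Finset.mem_Ico] at hn; omega)
  have hrows : ∀ n ≥ N 0, ∃ t, η (cutRows c) n t ≠ 0 := fun n hn => by
    obtain ⟨j, hj⟩ := exists_mem_Ico_succ hn (m := n + 1) (by simp only [N]; omega)
    exact hc j n (Finset.mem_Ico.mpr hj)
  exact (cutRows_row_finite c _).not_infinite ((H _).2.2 _ hrows _ le_rfl)
end

section
/- Give ℕ the discrete topology and function spaces the product topology. There do not exist continuous functions η : (ℕ → ℕ) → (ℕ → ℕ → ℕ), r₋ : ℕ × (ℕ → ℕ) → (ℕ → ℕ), and r₊ : (ℕ → ℕ) × (ℕ → ℕ) → ℕ such that for every x : ℕ → ℕ, writing y = η x: (i) (∃ a, ∀ n, x n ≤ a) ↔ (∀ n, ∃ s, ∀ t ≥ s, y n t = 0); (ii) whenever a satisfies ∀ n, x n ≤ a, the function u = r₋ (a, x) satisfies ∀ n, ∀ t ≥ u n, y n t = 0; and (iii) whenever u satisfies ∀ n, ∀ t ≥ u n, y n t = 0, the number a = r₊ (u, x) satisfies ∀ n, x n ≤ a. -/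
open Filter

private lemma cyl_mem {z : ℕ → ℕ} {P : Set (ℕ → ℕ)} (hP : P ∈ nhds z) :
    ∃ S : Finset ℕ, ∀ z' : ℕ → ℕ, (∀ i ∈ S, z' i = z i) → z' ∈ P := by
  rw [nhds_pi, Filter.mem_pi] at hP
  obtain ⟨I, hI, V, hV, hVP⟩ := hP
  refine ⟨hI.toFinset, fun z' hz' => hVP fun i hi => ?_⟩
  rw [hz' i (hI.mem_toFinset.mpr hi)]
  exact mem_of_mem_nhds (hV i)

private lemma cyl {f : (ℕ → ℕ) → ℕ} (hf : Continuous f) (z : ℕ → ℕ) :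
    ∃ S : Finset ℕ, ∀ z' : ℕ → ℕ, (∀ i ∈ S, z' i = z i) → f z' = f z := by
  obtain ⟨S, hS⟩ := cyl_mem ((hf.isOpen_preimage {f z} (isOpen_discrete _)).mem_nhds rfl)
  exact ⟨S, fun z' h => hS z' h⟩

private lemma cyl2 {f : (ℕ → ℕ) × (ℕ → ℕ) → ℕ} (hf : Continuous f) (u x : ℕ → ℕ) :
    ∃ S T : Finset ℕ, ∀ u' x' : ℕ → ℕ, (∀ i ∈ S, u' i = u i) →
      (∀ j ∈ T, x' j = x j) → f (u', x') = f (u, x) := by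
  have h : f ⁻¹' {f (u, x)} ∈ nhds (u, x) :=
    (hf.isOpen_preimage _ (isOpen_discrete _)).mem_nhds rfl
  rw [nhds_prod_eq, Filter.mem_prod_iff] at h
  obtain ⟨P, hP, Q, hQ, hPQ⟩ := h
  obtain ⟨S, hS⟩ := cyl_mem hP
  obtain ⟨T, hT⟩ := cyl_mem hQ
  exact ⟨S, T, fun u' x' h1 h2 => hPQ (Set.mk_mem_prod (hS u' h1) (hT x' h2))⟩

/-- continuous version of the separation ⟨∀^∞∀⟩ ≰ ⟨∀∀^∞⟩. -/
theorem stmt_14 :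
    ¬ ∃ (η : (ℕ → ℕ) → (ℕ → ℕ → ℕ)) (rminus : ℕ × (ℕ → ℕ) → (ℕ → ℕ))
        (rplus : (ℕ → ℕ) × (ℕ → ℕ) → ℕ),
      Continuous η ∧ Continuous rminus ∧ Continuous rplus ∧
      ∀ x : ℕ → ℕ,
        ((∃ a, ∀ n, x n ≤ a) ↔ (∀ n, ∃ s, ∀ t ≥ s, η x n t = 0)) ∧
        (∀ a, (∀ n, x n ≤ a) → ∀ n, ∀ t ≥ rminus (a, x) n, η x n t = 0) ∧
        (∀ u : ℕ → ℕ, (∀ n, ∀ t ≥ u n, η x n t = 0) → ∀ n, x n ≤ rplus (u, x)) := by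
  rintro ⟨η, rminus, rplus, hη, hrm, hrp, hspec⟩
  set x₀ : ℕ → ℕ := fun _ => 0 with hx₀
  set u₀ : ℕ → ℕ := rminus (0, x₀) with hu₀def
  have hu₀ : ∀ n, ∀ t ≥ u₀ n, η x₀ n t = 0 := (hspec x₀).2.1 0 (fun n => le_refl 0)
  obtain ⟨S, T, hST⟩ := cyl2 hrp u₀ x₀
  set A : ℕ := rplus (u₀, x₀) with hA
  set c : ℕ → ℕ := rminus (A + 1, x₀) with hc
  have hrmc : ∀ n : ℕ, Continuous fun x : ℕ → ℕ => rminus (A + 1, x) n :=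
    fun n => (continuous_apply n).comp (hrm.comp (Continuous.prodMk_right (A + 1)))
  have hηc : ∀ n t : ℕ, Continuous fun x : ℕ → ℕ => η x n t :=
    fun n t => (continuous_apply t).comp ((continuous_apply n).comp hη)
  have hHf : ∀ n, ∀ z' : ℕ → ℕ, (∀ i ∈ (cyl (hrmc n) x₀).choose, z' i = x₀ i) →
      rminus (A + 1, z') n = c n := fun n => (cyl (hrmc n) x₀).choose_spec
  have hKf : ∀ n t, ∀ z' : ℕ → ℕ, (∀ i ∈ (cyl (hηc n t) x₀).choose, z' i = x₀ i) →
      η z' n t = η x₀ n t := fun n t => (cyl (hηc n t) x₀).choose_spec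
  set B : Finset ℕ :=
    T ∪ S.biUnion (fun n => (cyl (hrmc n) x₀).choose) ∪
      S.biUnion (fun n => (Finset.range (c n)).biUnion (fun t => (cyl (hηc n t) x₀).choose))
    with hB
  set m : ℕ := B.sup id + 1 with hm
  have hmB : m ∉ B := fun h => by
    have := Finset.le_sup (f := id) h
    simp only [id] at this
    omega
  set x' : ℕ → ℕ := Function.update x₀ m (A + 1) with hx'
  have hx'agree : ∀ i ∈ B, x' i = x₀ i := by
    intro i hi
    have hne : i ≠ m := fun h => hmB (h ▸ hi)
    simp [hx', Function.update_of_ne hne]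
  have hx'm : x' m = A + 1 := Function.update_self _ _ _
  have hx'bd : ∀ n, x' n ≤ A + 1 := by
    intro n
    by_cases h : n = m
    · rw [h, hx'm]
    · simp [hx', Function.update_of_ne h, hx₀]
  have hu₁ : ∀ n, ∀ t ≥ rminus (A + 1, x') n, η x' n t = 0 := (hspec x').2.1 (A + 1) hx'bd
  have hcn : ∀ n ∈ S, rminus (A + 1, x') n = c n := by
    intro n hn
    refine hHf n x' (fun i hi => hx'agree i ?_)
    exact Finset.mem_union_left _ (Finset.mem_union_right _ (Finset.mem_biUnion.mpr ⟨n, hn, hi⟩))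
  have key : ∀ n ∈ S, ∀ t ≥ u₀ n, η x' n t = 0 := by
    intro n hn t ht
    by_cases h : t < c n
    · have heq : η x' n t = η x₀ n t := by
        refine hKf n t x' (fun i hi => hx'agree i ?_)
        refine Finset.mem_union_right _ (Finset.mem_biUnion.mpr ⟨n, hn, ?_⟩)
        exact Finset.mem_biUnion.mpr ⟨t, Finset.mem_range.mpr h, hi⟩
      rw [heq]
      exact hu₀ n t ht
    · exact hu₁ n t (by rw [hcn n hn]; omega)
  set u' : ℕ → ℕ := fun n => if n ∈ S then u₀ n else rminus (A + 1, x') n with hu'def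
  have hu' : ∀ n, ∀ t ≥ u' n, η x' n t = 0 := by
    intro n t ht
    by_cases h : n ∈ S
    · exact key n h t (by simpa [hu'def, h] using ht)
    · exact hu₁ n t (by simpa [hu'def, h] using ht)
  have heq : rplus (u', x') = A := by
    refine hST u' x' (fun i hi => by simp [hu'def, hi]) (fun j hj => hx'agree j ?_)
    exact Finset.mem_union_left _ (Finset.mem_union_left _ hj)
  have hge : x' m ≤ rplus (u', x') := (hspec x').2.2 u' hu' m
  rw [heq, hx'm] at hge
  omega
end
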